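/- Let G and H be Lie groups, t : H → G a smooth group homomorphism, and α : G × H → H a smooth action of G on H by group automorphisms, such that (G,H,t,α) is a crossed module. Let M be a second-countable smooth manifold and let (g,a) be a Γ-cocycle with respect to an open cover {U_i}_{i∈I} of M whose components g_{ij} and a_{ijk} are smooth maps. Then there is a countable subcover such that the restricted Γ-cocycle is equivalent, via smooth equivalence data (h_i, e_{ij}), to a normalized smooth Γ-cocycle (g',a') (i.e. one with g'_{ii} = 1 and a'_{iij} = a'_{ijj} = a'_{iji} = 1 for all i, j). (Remark 2.1 of the paper: every Γ-cocycle is equivalent to a normalized Γ-cocycle.) -/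

import Mathlib

/-- A crossed module of groups. -/
structure CrossedModule (G H : Type*) [Group G] [Group H] where
  t : H → G
  α : G → H → H
  t_mul : ∀ h₁ h₂ : H, t (h₁ * h₂) = t h₁ * t h₂
  α_one : ∀ h : H, α 1 h = h
  α_mul : ∀ (g₁ g₂ : G) (h : H), α (g₁ * g₂) h = α g₁ (α g₂ h)
  α_hom : ∀ (g : G) (h₁ h₂ : H), α g (h₁ * h₂) = α g h₁ * α g h₂
  peiffer : ∀ h x : H, α (t h) x = h * x * h⁻¹
  equivariance : ∀ (g : G) (h : H), t (α g h) = g * t h * g⁻¹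

/-- A `Γ`-cocycle with respect to a family of subsets `U : I → Set X`, for the
Lie 2-group `Γ` associated to a crossed module `(G,H,t,α)`. -/
structure GammaCocycle {G H : Type*} [Group G] [Group H] (cm : CrossedModule G H)
    {X I : Type*} (U : I → Set X) where
  g : I → I → X → G
  a : I → I → I → X → H
  cocycle_g : ∀ (i j k : I) (x : X), x ∈ U i → x ∈ U j → x ∈ U k →
    g i k x = cm.t (a i j k x) * g j k x * g i j x
  cocycle_a : ∀ (i j k l : I) (x : X), x ∈ U i → x ∈ U j → x ∈ U k → x ∈ U l →
    a i k l x * cm.α (g k l x) (a i j k x) = a i j l x * a j k l x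

/-!
Twisting a cocycle by data `(1, e)` yields an equivalent cocycle, and twisting by `e` and then by
`f` is twisting by `f * e`. Twisting by `e i j = a i j j` makes `g i i`, `a i i j` and `a i j j`
trivial: the cocycle identities at the degenerate index tuples `(j,j,j)`, `(i,j,j,j)`, `(i,i,i,j)`
express them through `a j j j` and `a i i i`. For a linear order on the index set, twisting the result
by `e i j = a j i j` for `i < j` (and `1` otherwise) then kills `a i j i` as well, because the
identity at `(j,i,j,i)` now reads `α (g j i) (a j i j) = a i j i`. All twisting data are built from the
cocycle by group operations, `t` and `α`, so they are smooth; second countability only serves to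
pass to a countable subcover.
-/

namespace CrossedModule

variable {G H : Type*} [Group G] [Group H] (cm : CrossedModule G H)

theorem t_one : cm.t 1 = 1 := (MonoidHom.mk' cm.t cm.t_mul).map_one

theorem t_inv (h : H) : cm.t h⁻¹ = (cm.t h)⁻¹ := (MonoidHom.mk' cm.t cm.t_mul).map_inv h

theorem α_map_one (g : G) : cm.α g 1 = 1 := (MonoidHom.mk' (cm.α g) (cm.α_hom g)).map_one

theorem α_map_inv (g : G) (x : H) : cm.α g x⁻¹ = (cm.α g x)⁻¹ :=
  (MonoidHom.mk' (cm.α g) (cm.α_hom g)).map_inv x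

theorem α_t_mul (h : H) (g : G) (x : H) : cm.α (cm.t h * g) x = h * cm.α g x * h⁻¹ := by
  rw [cm.α_mul, cm.peiffer]

end CrossedModule

attribute [ext] GammaCocycle

namespace GammaCocycle

variable {G H : Type*} [Group G] [Group H] {cm : CrossedModule G H} {X I : Type*}
  {U : I → Set X}

/-- The cocycle equivalent to `c` via the equivalence data `(1, e)`; its `a` is the second
equivalence equation solved for `a'`. -/
def twist (c : GammaCocycle cm U) (e : I → I → X → H) : GammaCocycle cm U where
  g i j x := cm.t (e i j x) * c.g i j x
  a i j k x := e i k x * c.a i j k x * (e j k x)⁻¹ *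
    (cm.α (cm.t (e j k x) * c.g j k x) (e i j x))⁻¹
  cocycle_g i j k x hi hj hk := by
    rw [c.cocycle_g i j k x hi hj hk]
    simp only [cm.t_mul, cm.t_inv, cm.equivariance]
    group
  cocycle_a i j k l x hi hj hk hl := by
    have hα : cm.α (c.g k l x) (c.a i j k x) = (c.a i k l x)⁻¹ * (c.a i j l x * c.a j k l x) := by
      rw [← c.cocycle_a i j k l x hi hj hk hl]; group
    rw [c.cocycle_g j k l x hj hk hl]
    simp only [cm.α_t_mul, cm.α_hom, cm.α_map_inv, cm.α_mul, mul_assoc, hα]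
    group

variable (c : GammaCocycle cm U) (e f : I → I → X → H)

@[simp]
theorem twist_g (i j : I) (x : X) : (c.twist e).g i j x = cm.t (e i j x) * c.g i j x := rfl

theorem twist_a (i j k : I) (x : X) :
    (c.twist e).a i j k x = e i k x * c.a i j k x * (e j k x)⁻¹ *
      (cm.α ((c.twist e).g j k x) (e i j x))⁻¹ := rfl

theorem twist_equiv (i j k : I) (x : X) :
    (c.twist e).a i j k x * cm.α ((c.twist e).g j k x) (e i j x) * e j k x =
      e i k x * c.a i j k x := by
  rw [twist_a]; group

theorem twist_twist : (c.twist e).twist f = c.twist (f * e) := by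
  ext i j k x
  · simp only [twist_g, Pi.mul_apply, cm.t_mul, mul_assoc]
  · simp only [twist_a, twist_g, Pi.mul_apply, cm.t_mul, cm.α_t_mul, cm.α_hom, mul_assoc]
    group


structure IsNormalized (c : GammaCocycle cm U) : Prop where
  g_ii : ∀ i x, x ∈ U i → c.g i i x = 1
  a_iij : ∀ i j x, x ∈ U i → x ∈ U j → c.a i i j x = 1
  a_ijj : ∀ i j x, x ∈ U i → x ∈ U j → c.a i j j x = 1
  a_iji : ∀ i j x, x ∈ U i → x ∈ U j → c.a i j i x = 1

section Diag

variable (c : GammaCocycle cm U)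

theorem t_a_mul_g_self {j : I} {x : X} (hj : x ∈ U j) : cm.t (c.a j j j x) * c.g j j x = 1 := by
  have h := c.cocycle_g j j j x hj hj hj
  rwa [right_eq_mul] at h

theorem a_ijj_eq_a_jjj {i j : I} {x : X} (hi : x ∈ U i) (hj : x ∈ U j) :
    c.a i j j x = c.a j j j x := by
  have h := mul_left_cancel (c.cocycle_a i j j j x hi hj hj hj)
  rwa [eq_inv_of_mul_eq_one_right (c.t_a_mul_g_self hj), ← cm.t_inv, cm.peiffer, inv_inv,
    mul_assoc, inv_mul_eq_iff_eq_mul, mul_left_inj] at h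

theorem α_g_a_iii {i j : I} {x : X} (hi : x ∈ U i) (hj : x ∈ U j) :
    cm.α (c.g i j x) (c.a i i i x) = c.a i i j x :=
  mul_left_cancel (c.cocycle_a i i i j x hi hi hi hj)

theorem α_g_a_jij {i j : I} {x : X} (hi : x ∈ U i) (hj : x ∈ U j) (ha_jji : c.a j j i x = 1)
    (ha_jii : c.a j i i x = 1) : cm.α (c.g j i x) (c.a j i j x) = c.a i j i x := by
  have h := c.cocycle_a j i j i x hj hi hj hi
  rwa [ha_jji, ha_jii, one_mul, one_mul] at h

def diagData : I → I → X → H := fun i j x => c.a i j j x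

def normalizeDiag : GammaCocycle cm U := c.twist c.diagData

theorem normalizeDiag_g_ii {i : I} {x : X} (hi : x ∈ U i) : c.normalizeDiag.g i i x = 1 :=
  c.t_a_mul_g_self hi

theorem normalizeDiag_a_iij {i j : I} {x : X} (hi : x ∈ U i) (hj : x ∈ U j) :
    c.normalizeDiag.a i i j x = 1 := by
  simp only [normalizeDiag, diagData, twist_a, twist_g, cm.α_t_mul, c.α_g_a_iii hi hj]
  group

theorem normalizeDiag_a_ijj {i j : I} {x : X} (hi : x ∈ U i) (hj : x ∈ U j) :
    c.normalizeDiag.a i j j x = 1 := by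
  rw [normalizeDiag, twist_a, ← normalizeDiag, c.normalizeDiag_g_ii hj, cm.α_one]
  simp only [diagData, c.a_ijj_eq_a_jjj hi hj]
  group

end Diag

section Loops

variable [LinearOrder I] (c : GammaCocycle cm U)

/-- Killing `a i j i` needs `α (g j i) (e i j) * e j i = a i j i` for both orders of `i, j`;
the order on `I` decides which of the two factors carries it. -/
def loopData : I → I → X → H := fun i j x => if i < j then c.a j i j x else 1

def normalizeLoops : GammaCocycle cm U := c.twist c.loopData

variable (hg : ∀ i x, x ∈ U i → c.g i i x = 1)
  (ha_iij : ∀ i j x, x ∈ U i → x ∈ U j → c.a i i j x = 1)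
  (ha_ijj : ∀ i j x, x ∈ U i → x ∈ U j → c.a i j j x = 1)
include hg ha_iij ha_ijj

theorem isNormalized_normalizeLoops : c.normalizeLoops.IsNormalized := by
  have hg' : ∀ i x, x ∈ U i → c.normalizeLoops.g i i x = 1 := fun i x hi => by
    simp [normalizeLoops, loopData, hg i x hi, cm.t_one]
  refine ⟨hg', fun i j x hi hj => ?_, fun i j x hi hj => ?_, fun i j x hi hj => ?_⟩
  · simp [normalizeLoops, loopData, twist_a, ha_iij i j x hi hj, cm.α_map_one]
  · rw [normalizeLoops, twist_a, ← normalizeLoops, hg' j x hj, cm.α_one]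
    simp [loopData, ha_ijj i j x hi hj]
  · rcases lt_trichotomy i j with hij | rfl | hji
    · simp [normalizeLoops, loopData, twist_a, hij, hij.not_gt, cm.t_one,
        c.α_g_a_jij hi hj (ha_iij j i x hj hi) (ha_ijj j i x hj hi)]
    · simp [normalizeLoops, loopData, twist_a, ha_iij i i x hi hi, cm.α_map_one]
    · simp [normalizeLoops, loopData, twist_a, hji, hji.not_gt, cm.α_map_one]

end Loops

section Normalize

variable [LinearOrder I] (c : GammaCocycle cm U)

def normalizingData : I → I → X → H := c.normalizeDiag.loopData * c.diagData

def normalize : GammaCocycle cm U := c.twist c.normalizingData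

theorem isNormalized_normalize : c.normalize.IsNormalized := by
  rw [normalize, normalizingData, ← twist_twist, ← normalizeDiag]
  exact c.normalizeDiag.isNormalized_normalizeLoops
    (fun _ _ => c.normalizeDiag_g_ii) (fun _ _ _ => c.normalizeDiag_a_iij)
    (fun _ _ _ => c.normalizeDiag_a_ijj)

end Normalize

end GammaCocycle

namespace GammaCocycle

variable {EM HM : Type*} [NormedAddCommGroup EM] [NormedSpace ℝ EM] [TopologicalSpace HM]
  (IM : ModelWithCorners ℝ EM HM)
  {EG HG : Type*} [NormedAddCommGroup EG] [NormedSpace ℝ EG] [TopologicalSpace HG]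
  (IG : ModelWithCorners ℝ EG HG)
  {EH HH : Type*} [NormedAddCommGroup EH] [NormedSpace ℝ EH] [TopologicalSpace HH]
  (IH : ModelWithCorners ℝ EH HH)
  {G : Type*} [Group G] [TopologicalSpace G] [ChartedSpace HG G]
  {H : Type*} [Group H] [TopologicalSpace H] [ChartedSpace HH H]
  {M : Type*} [TopologicalSpace M] [ChartedSpace HM M]
  (n : WithTop ℕ∞) {cm : CrossedModule G H} {I : Type*} {U : I → Set M}

structure IsContMDiff (c : GammaCocycle cm U) : Prop where
  contMDiffOn_g : ∀ i j, ContMDiffOn IM IG n (c.g i j) (U i ∩ U j)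
  contMDiffOn_a : ∀ i j k, ContMDiffOn IM IH n (c.a i j k) (U i ∩ U j ∩ U k)

variable {IM IG IH n} {c : GammaCocycle cm U}

theorem IsContMDiff.twist [ContMDiffMul IG n G] [LieGroup IH n H] (ht : ContMDiff IH IG n cm.t)
    (hα : ContMDiff (IG.prod IH) IH n (fun p : G × H => cm.α p.1 p.2))
    (hc : c.IsContMDiff IM IG IH n) {e : I → I → M → H}
    (he : ∀ i j, ContMDiffOn IM IH n (e i j) (U i ∩ U j)) :
    (c.twist e).IsContMDiff IM IG IH n := by
  have hg : ∀ i j, ContMDiffOn IM IG n ((c.twist e).g i j) (U i ∩ U j) := fun i j =>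
    (ht.comp_contMDiffOn (he i j)).mul (hc.contMDiffOn_g i j)
  refine ⟨hg, fun i j k => ?_⟩
  have hik : U i ∩ U j ∩ U k ⊆ U i ∩ U k := fun x hx => ⟨hx.1.1, hx.2⟩
  have hjk : U i ∩ U j ∩ U k ⊆ U j ∩ U k := fun x hx => ⟨hx.1.2, hx.2⟩
  have hij : U i ∩ U j ∩ U k ⊆ U i ∩ U j := Set.inter_subset_left
  exact ((((he i k).mono hik).mul (hc.contMDiffOn_a i j k)).mul ((he j k).mono hjk).inv).mul
    (hα.comp_contMDiffOn (((hg j k).mono hjk).prodMk ((he i j).mono hij))).inv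

theorem IsContMDiff.contMDiffOn_diagData (hc : c.IsContMDiff IM IG IH n) (i j : I) :
    ContMDiffOn IM IH n (c.diagData i j) (U i ∩ U j) :=
  (hc.contMDiffOn_a i j j).mono fun _ hx => ⟨hx, hx.2⟩

theorem IsContMDiff.contMDiffOn_loopData [LinearOrder I] (hc : c.IsContMDiff IM IG IH n)
    (i j : I) : ContMDiffOn IM IH n (c.loopData i j) (U i ∩ U j) := by
  unfold loopData
  by_cases hij : i < j
  · simp only [hij, if_true]
    exact (hc.contMDiffOn_a j i j).mono fun _ hx => ⟨⟨hx.2, hx.1⟩, hx.2⟩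
  · simp only [hij, if_false]
    exact contMDiffOn_const

section LieGroup

variable [LinearOrder I] [ContMDiffMul IG n G] [LieGroup IH n H] (ht : ContMDiff IH IG n cm.t)
  (hα : ContMDiff (IG.prod IH) IH n (fun p : G × H => cm.α p.1 p.2))
  (hc : c.IsContMDiff IM IG IH n)
include ht hα hc

theorem IsContMDiff.contMDiffOn_normalizingData (i j : I) :
    ContMDiffOn IM IH n (c.normalizingData i j) (U i ∩ U j) :=
  ((hc.twist ht hα hc.contMDiffOn_diagData).contMDiffOn_loopData i j).mul
    (hc.contMDiffOn_diagData i j)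

theorem IsContMDiff.normalize : c.normalize.IsContMDiff IM IG IH n :=
  hc.twist ht hα (hc.contMDiffOn_normalizingData ht hα)

end LieGroup

end GammaCocycle

theorem smooth_cocycle_normalization_general
    {EG HG : Type*} [NormedAddCommGroup EG] [NormedSpace ℝ EG] [TopologicalSpace HG]
    (IG : ModelWithCorners ℝ EG HG)
    {EH HH : Type*} [NormedAddCommGroup EH] [NormedSpace ℝ EH] [TopologicalSpace HH]
    (IH : ModelWithCorners ℝ EH HH)
    {G : Type*} [Group G] [TopologicalSpace G] [ChartedSpace HG G] [LieGroup IG (⊤ : ℕ∞) G]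
    {H : Type*} [Group H] [TopologicalSpace H] [ChartedSpace HH H] [LieGroup IH (⊤ : ℕ∞) H]
    (cm : CrossedModule G H)
    (ht_smooth : ContMDiff IH IG (⊤ : ℕ∞) cm.t)
    (hα_smooth : ContMDiff (IG.prod IH) IH (⊤ : ℕ∞) (fun p : G × H => cm.α p.1 p.2))
    {EM HM : Type*} [NormedAddCommGroup EM] [NormedSpace ℝ EM] [TopologicalSpace HM]
    (IM : ModelWithCorners ℝ EM HM)
    {M : Type*} [TopologicalSpace M] [ChartedSpace HM M]
    [SecondCountableTopology M]
    {I : Type*} (U : I → Set M) (hUopen : ∀ i : I, IsOpen (U i))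
    (hUcover : ∀ x : M, ∃ i : I, x ∈ U i)
    (c : GammaCocycle cm U)
    (hg_smooth : ∀ i j : I, ContMDiffOn IM IG (⊤ : ℕ∞) (c.g i j) (U i ∩ U j))
    (ha_smooth : ∀ i j k : I, ContMDiffOn IM IH (⊤ : ℕ∞) (c.a i j k) (U i ∩ U j ∩ U k)) :
    ∃ J : Set I, J.Countable ∧ (∀ x : M, ∃ i ∈ J, x ∈ U i) ∧
      ∃ (h : I → M → G) (e : I → I → M → H)
        (g' : I → I → M → G) (a' : I → I → I → M → H),
        -- the equivalence data are smooth
        (∀ i ∈ J, ContMDiffOn IM IG (⊤ : ℕ∞) (h i) (U i)) ∧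
        (∀ i ∈ J, ∀ j ∈ J, ContMDiffOn IM IH (⊤ : ℕ∞) (e i j) (U i ∩ U j)) ∧
        -- the new cocycle is smooth
        (∀ i ∈ J, ∀ j ∈ J, ContMDiffOn IM IG (⊤ : ℕ∞) (g' i j) (U i ∩ U j)) ∧
        (∀ i ∈ J, ∀ j ∈ J, ∀ k ∈ J,
          ContMDiffOn IM IH (⊤ : ℕ∞) (a' i j k) (U i ∩ U j ∩ U k)) ∧
        -- `(g',a')` is a `Γ`-cocycle on the subcover
        (∀ i ∈ J, ∀ j ∈ J, ∀ k ∈ J, ∀ x : M, x ∈ U i → x ∈ U j → x ∈ U k →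
          g' i k x = cm.t (a' i j k x) * g' j k x * g' i j x) ∧
        (∀ i ∈ J, ∀ j ∈ J, ∀ k ∈ J, ∀ l ∈ J, ∀ x : M,
          x ∈ U i → x ∈ U j → x ∈ U k → x ∈ U l →
          a' i k l x * cm.α (g' k l x) (a' i j k x) = a' i j l x * a' j k l x) ∧
        -- `(h,e)` is an equivalence from the restricted `(g,a)` to `(g',a')`
        (∀ i ∈ J, ∀ j ∈ J, ∀ x : M, x ∈ U i → x ∈ U j →
          g' i j x * h i x = cm.t (e i j x) * h j x * c.g i j x) ∧
        (∀ i ∈ J, ∀ j ∈ J, ∀ k ∈ J, ∀ x : M, x ∈ U i → x ∈ U j → x ∈ U k →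
          a' i j k x * cm.α (g' j k x) (e i j x) * e j k x =
            e i k x * cm.α (h k x) (c.a i j k x)) ∧
        -- `(g',a')` is normalized
        (∀ i ∈ J, ∀ x : M, x ∈ U i → g' i i x = 1) ∧
        (∀ i ∈ J, ∀ j ∈ J, ∀ x : M, x ∈ U i → x ∈ U j →
          a' i i j x = 1 ∧ a' i j j x = 1 ∧ a' i j i x = 1) := by
  let : LinearOrder I := IsWellOrder.linearOrder WellOrderingRel
  obtain ⟨J, hJ_countable, hJ⟩ := TopologicalSpace.isOpen_iUnion_countable U hUopen
  have hJ_cover (x : M) : ∃ i ∈ J, x ∈ U i := by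
    have hx : x ∈ ⋃ i ∈ J, U i := by rw [hJ]; exact Set.mem_iUnion.2 (hUcover x)
    simpa only [Set.mem_iUnion, exists_prop] using hx
  have hc : c.IsContMDiff IM IG IH (⊤ : ℕ∞) := ⟨hg_smooth, ha_smooth⟩
  have hc' := hc.normalize ht_smooth hα_smooth
  have hN := c.isNormalized_normalize
  refine ⟨J, hJ_countable, hJ_cover, fun _ _ => 1, c.normalizingData, c.normalize.g,
    c.normalize.a, fun _ _ => contMDiffOn_const,
    fun i _ j _ => hc.contMDiffOn_normalizingData ht_smooth hα_smooth i j,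
    fun i _ j _ => hc'.contMDiffOn_g i j, fun i _ j _ k _ => hc'.contMDiffOn_a i j k,
    fun i _ j _ k _ => c.normalize.cocycle_g i j k,
    fun i _ j _ k _ l _ => c.normalize.cocycle_a i j k l,
    fun i _ j _ x _ _ => by simp only [mul_one]; rfl,
    fun i _ j _ k _ x _ _ _ => by rw [cm.α_one]; exact c.twist_equiv _ i j k x,
    fun i _ => hN.g_ii i,
    fun i _ j _ x hi hj => ⟨hN.a_iij i j x hi hj, hN.a_ijj i j x hi hj, hN.a_iji i j x hi hj⟩⟩

/-- Every smooth `Γ`-cocycle on a second-countable smooth manifold is, after passing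
to a countable subcover, equivalent via smooth equivalence data to a normalized
smooth `Γ`-cocycle. -/
theorem smooth_cocycle_normalization
    {EG HG : Type*} [NormedAddCommGroup EG] [NormedSpace ℝ EG] [TopologicalSpace HG]
    (IG : ModelWithCorners ℝ EG HG)
    {EH HH : Type*} [NormedAddCommGroup EH] [NormedSpace ℝ EH] [TopologicalSpace HH]
    (IH : ModelWithCorners ℝ EH HH)
    {G : Type*} [Group G] [TopologicalSpace G] [ChartedSpace HG G] [LieGroup IG (⊤ : ℕ∞) G]
    {H : Type*} [Group H] [TopologicalSpace H] [ChartedSpace HH H] [LieGroup IH (⊤ : ℕ∞) H]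
    (cm : CrossedModule G H)
    (ht_smooth : ContMDiff IH IG (⊤ : ℕ∞) cm.t)
    (hα_smooth : ContMDiff (IG.prod IH) IH (⊤ : ℕ∞) (fun p : G × H => cm.α p.1 p.2))
    {EM HM : Type*} [NormedAddCommGroup EM] [NormedSpace ℝ EM] [TopologicalSpace HM]
    (IM : ModelWithCorners ℝ EM HM)
    {M : Type*} [TopologicalSpace M] [ChartedSpace HM M] [IsManifold IM (⊤ : ℕ∞) M]
    [SecondCountableTopology M]
    {I : Type*} (U : I → Set M) (hUopen : ∀ i : I, IsOpen (U i))
    (hUcover : ∀ x : M, ∃ i : I, x ∈ U i)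
    (c : GammaCocycle cm U)
    (hg_smooth : ∀ i j : I, ContMDiffOn IM IG (⊤ : ℕ∞) (c.g i j) (U i ∩ U j))
    (ha_smooth : ∀ i j k : I, ContMDiffOn IM IH (⊤ : ℕ∞) (c.a i j k) (U i ∩ U j ∩ U k)) :
    ∃ J : Set I, J.Countable ∧ (∀ x : M, ∃ i ∈ J, x ∈ U i) ∧
      ∃ (h : I → M → G) (e : I → I → M → H)
        (g' : I → I → M → G) (a' : I → I → I → M → H),
        -- the equivalence data are smooth
        (∀ i ∈ J, ContMDiffOn IM IG (⊤ : ℕ∞) (h i) (U i)) ∧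
        (∀ i ∈ J, ∀ j ∈ J, ContMDiffOn IM IH (⊤ : ℕ∞) (e i j) (U i ∩ U j)) ∧
        -- the new cocycle is smooth
        (∀ i ∈ J, ∀ j ∈ J, ContMDiffOn IM IG (⊤ : ℕ∞) (g' i j) (U i ∩ U j)) ∧
        (∀ i ∈ J, ∀ j ∈ J, ∀ k ∈ J,
          ContMDiffOn IM IH (⊤ : ℕ∞) (a' i j k) (U i ∩ U j ∩ U k)) ∧
        -- `(g',a')` is a `Γ`-cocycle on the subcover
        (∀ i ∈ J, ∀ j ∈ J, ∀ k ∈ J, ∀ x : M, x ∈ U i → x ∈ U j → x ∈ U k →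
          g' i k x = cm.t (a' i j k x) * g' j k x * g' i j x) ∧
        (∀ i ∈ J, ∀ j ∈ J, ∀ k ∈ J, ∀ l ∈ J, ∀ x : M,
          x ∈ U i → x ∈ U j → x ∈ U k → x ∈ U l →
          a' i k l x * cm.α (g' k l x) (a' i j k x) = a' i j l x * a' j k l x) ∧
        -- `(h,e)` is an equivalence from the restricted `(g,a)` to `(g',a')`
        (∀ i ∈ J, ∀ j ∈ J, ∀ x : M, x ∈ U i → x ∈ U j →
          g' i j x * h i x = cm.t (e i j x) * h j x * c.g i j x) ∧
        (∀ i ∈ J, ∀ j ∈ J, ∀ k ∈ J, ∀ x : M, x ∈ U i → x ∈ U j → x ∈ U k →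
          a' i j k x * cm.α (g' j k x) (e i j x) * e j k x =
            e i k x * cm.α (h k x) (c.a i j k x)) ∧
        -- `(g',a')` is normalized
        (∀ i ∈ J, ∀ x : M, x ∈ U i → g' i i x = 1) ∧
        (∀ i ∈ J, ∀ j ∈ J, ∀ x : M, x ∈ U i → x ∈ U j →
          a' i i j x = 1 ∧ a' i j j x = 1 ∧ a' i j i x = 1) :=
  smooth_cocycle_normalization_general IG IH cm ht_smooth hα_smooth IM U hUopen hUcover c hg_smooth
    ha_smooth
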